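/- Let C_A and C_B be linear codes over F₂ of lengths n_A and n_B. The dual of the tensor product code C_A ⊗ C_B (the set of n_A × n_B matrices with all columns in C_A and all rows in C_B) equals C_A^⊥ ⊗ F₂^{n_B} + F₂^{n_A} ⊗ C_B^⊥, where for subspaces U ⊆ F₂^{n_A} and W ⊆ F₂^{n_B}, U ⊗ W denotes the span of matrices u wᵀ with u ∈ U, w ∈ W. -/

import Mathlib

open Finset

private lemma exists_proj (n : ℕ) (C : Submodule (ZMod 2) (Fin n → ZMod 2)) :
    ∃ f : (Fin n → ZMod 2) →ₗ[ZMod 2] (Fin n → ZMod 2),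
      (∀ x, f x ∈ C) ∧ (∀ c ∈ C, ∀ k, ∑ i, c i * f (Pi.single i 1) k = c k) := by
  obtain ⟨C', hC⟩ := Submodule.exists_isCompl C
  set f := C.subtype ∘ₗ C.projectionOnto C' hC with hfdef
  refine ⟨f, fun x => (C.projectionOnto C' hC x).2, ?_⟩
  intro c hc k
  have h2 : (∑ i, c i • f (Pi.single i 1)) = c := by
    simp_rw [← map_smul, ← map_sum]
    have hs : (∑ i, c i • Pi.single i (1 : ZMod 2)) = c := by
      funext m
      simp [Pi.single_apply]
    rw [hs, hfdef]
    simp [Submodule.projectionOnto_apply_left hC ⟨c, hc⟩]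
  have := congrFun h2 k
  simpa [Finset.sum_apply] using this

open Finset in
/-- The dual of the tensor code `C_A ⊗ C_B` equals
`C_A^⊥ ⊗ F₂^{n_B} + F₂^{n_A} ⊗ C_B^⊥`. -/
theorem dual_tensor_code (nA nB : ℕ)
    (CA : Submodule (ZMod 2) (Fin nA → ZMod 2))
    (CB : Submodule (ZMod 2) (Fin nB → ZMod 2)) :
    {N : Matrix (Fin nA) (Fin nB) (ZMod 2) |
        ∀ M : Matrix (Fin nA) (Fin nB) (ZMod 2),
          ((∀ j, (fun i => M i j) ∈ CA) ∧ (∀ i, (fun j => M i j) ∈ CB)) →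
            ∑ i, ∑ j, M i j * N i j = 0} =
      ↑(Submodule.span (ZMod 2)
        ({N : Matrix (Fin nA) (Fin nB) (ZMod 2) |
            ∃ u : Fin nA → ZMod 2, (∀ c ∈ CA, ∑ i, u i * c i = 0) ∧
              ∃ w : Fin nB → ZMod 2, N = Matrix.of fun i j => u i * w j} ∪
         {N : Matrix (Fin nA) (Fin nB) (ZMod 2) |
            ∃ w : Fin nB → ZMod 2, (∀ c ∈ CB, ∑ j, w j * c j = 0) ∧
              ∃ u : Fin nA → ZMod 2, N = Matrix.of fun i j => u i * w j})) := by
  ext N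
  simp only [Set.mem_setOf_eq, SetLike.mem_coe]
  constructor
  · -- hard direction
    intro hN
    obtain ⟨f, hf2, hf1⟩ := exists_proj nA CA
    obtain ⟨g, hg2, hg1⟩ := exists_proj nB CB
    -- "transpose" actions
    set ft : (Fin nA → ZMod 2) → (Fin nA → ZMod 2) :=
      fun x i => ∑ k, f (Pi.single i 1) k * x k with hft
    set gt : (Fin nB → ZMod 2) → (Fin nB → ZMod 2) :=
      fun x j => ∑ k, g (Pi.single j 1) k * x k with hgt
    -- key pairing properties
    have keyA : ∀ x : Fin nA → ZMod 2, ∀ c ∈ CA, ∑ i, (x i - ft x i) * c i = 0 := by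
      intro x c hc
      have h1 : ∑ i, ft x i * c i = ∑ k, x k * c k := by
        calc ∑ i, ft x i * c i = ∑ i, ∑ k, c i * f (Pi.single i 1) k * x k := by
              simp_rw [hft, Finset.sum_mul]
              exact Finset.sum_congr rfl fun i _ => Finset.sum_congr rfl fun k _ => by ring
          _ = ∑ k, (∑ i, c i * f (Pi.single i 1) k) * x k := by
              rw [Finset.sum_comm]
              exact Finset.sum_congr rfl fun k _ => by rw [Finset.sum_mul]
          _ = ∑ k, x k * c k := by
              exact Finset.sum_congr rfl fun k _ => by rw [hf1 c hc k]; ring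
      simp_rw [sub_mul, Finset.sum_sub_distrib, h1]
      simp
    have keyB : ∀ x : Fin nB → ZMod 2, ∀ c ∈ CB, ∑ j, (x j - gt x j) * c j = 0 := by
      intro x c hc
      have h1 : ∑ j, gt x j * c j = ∑ k, x k * c k := by
        calc ∑ j, gt x j * c j = ∑ j, ∑ k, c j * g (Pi.single j 1) k * x k := by
              simp_rw [hgt, Finset.sum_mul]
              exact Finset.sum_congr rfl fun j _ => Finset.sum_congr rfl fun k _ => by ring
          _ = ∑ k, (∑ j, c j * g (Pi.single j 1) k) * x k := by
              rw [Finset.sum_comm]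
              exact Finset.sum_congr rfl fun k _ => by rw [Finset.sum_mul]
          _ = ∑ k, x k * c k := by
              exact Finset.sum_congr rfl fun k _ => by rw [hg1 c hc k]; ring
      simp_rw [sub_mul, Finset.sum_sub_distrib, h1]
      simp
    set N2 : Matrix (Fin nA) (Fin nB) (ZMod 2) :=
      Matrix.of fun i j => ft (fun i' => N i' j) i with hN2
    set N3 : Matrix (Fin nA) (Fin nB) (ZMod 2) :=
      Matrix.of fun i j => gt (fun j' => N2 i j') j with hN3def
    -- N3 = 0
    have hN3 : ∀ i j, N3 i j = 0 := by
      intro i j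
      have hM := hN (Matrix.of fun k l => f (Pi.single i 1) k * g (Pi.single j 1) l) ?_
      · calc N3 i j
            = ∑ l, ∑ k, g (Pi.single j 1) l * (f (Pi.single i 1) k * N k l) := by
              simp only [hN3def, hgt, hN2, hft, Matrix.of_apply]
              exact Finset.sum_congr rfl fun l _ => by rw [Finset.mul_sum]
          _ = ∑ k, ∑ l,
                (Matrix.of fun k l => f (Pi.single i 1) k * g (Pi.single j 1) l) k l * N k l := by
              rw [Finset.sum_comm]
              exact Finset.sum_congr rfl fun k _ => Finset.sum_congr rfl fun l _ => by
                simp only [Matrix.of_apply]; ring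
          _ = 0 := hM
      · constructor
        · intro l
          have : (fun k => (Matrix.of fun k l => f (Pi.single i 1) k * g (Pi.single j 1) l) k l)
              = g (Pi.single j 1) l • f (Pi.single i 1) := by
            funext k; simp [mul_comm]
          rw [this]
          exact CA.smul_mem _ (hf2 _)
        · intro k
          have : (fun l => (Matrix.of fun k l => f (Pi.single i 1) k * g (Pi.single j 1) l) k l)
              = f (Pi.single i 1) k • g (Pi.single j 1) := by
            funext l; simp
          rw [this]
          exact CB.smul_mem _ (hg2 _)
    -- decomposition
    have hdecomp : N =
        (∑ j0 : Fin nB, Matrix.of fun i j =>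
            (N i j0 - N2 i j0) * (Pi.single j0 1 : Fin nB → ZMod 2) j) +
        (∑ i0 : Fin nA, Matrix.of fun i j =>
            (Pi.single i0 1 : Fin nA → ZMod 2) i * (N2 i0 j - N3 i0 j)) := by
      funext i j
      have e1 : (∑ j0 : Fin nB, Matrix.of fun i j =>
          (N i j0 - N2 i j0) * (Pi.single j0 1 : Fin nB → ZMod 2) j) i j = N i j - N2 i j := by
        rw [Matrix.sum_apply]
        simp [Pi.single_apply, mul_ite]
      have e2 : (∑ i0 : Fin nA, Matrix.of fun i j =>
          (Pi.single i0 1 : Fin nA → ZMod 2) i * (N2 i0 j - N3 i0 j)) i j = N2 i j - N3 i j := by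
        rw [Matrix.sum_apply]
        simp [Pi.single_apply, ite_mul]
      rw [Matrix.add_apply, e1, e2, hN3 i j]
      ring
    rw [hdecomp]
    apply Submodule.add_mem
    · apply Submodule.sum_mem
      intro j0 _
      apply Submodule.subset_span
      apply Set.mem_union_left
      refine ⟨fun i => N i j0 - N2 i j0, ?_, Pi.single j0 1, rfl⟩
      intro c hc
      have := keyA (fun i' => N i' j0) c hc
      simpa [hN2] using this
    · apply Submodule.sum_mem
      intro i0 _
      apply Submodule.subset_span
      apply Set.mem_union_right
      refine ⟨fun j => N2 i0 j - N3 i0 j, ?_, Pi.single i0 1, ?_⟩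
      · intro c hc
        have := keyB (fun j' => N2 i0 j') c hc
        simpa [hN3def] using this
      · rfl
  · -- easy direction
    intro hN
    induction hN using Submodule.span_induction with
    | mem x hx =>
      intro M hM
      rcases hx with ⟨u, hu, w, rfl⟩ | ⟨w, hw, u, rfl⟩
      · rw [Finset.sum_comm]
        apply Finset.sum_eq_zero
        intro j _
        have h0 := hu (fun i => M i j) (hM.1 j)
        calc ∑ i, M i j * (Matrix.of fun i j => u i * w j) i j
            = (∑ i, u i * M i j) * w j := by
              rw [Finset.sum_mul]
              exact Finset.sum_congr rfl fun i _ => by simp only [Matrix.of_apply]; ring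
          _ = 0 := by rw [h0, zero_mul]
      · apply Finset.sum_eq_zero
        intro i _
        have h0 := hw (fun j => M i j) (hM.2 i)
        calc ∑ j, M i j * (Matrix.of fun i j => u i * w j) i j
            = u i * ∑ j, w j * M i j := by
              rw [Finset.mul_sum]
              exact Finset.sum_congr rfl fun j _ => by simp only [Matrix.of_apply]; ring
          _ = 0 := by rw [h0, mul_zero]
    | zero => intro M _; simp
    | add x y hx hy ihx ihy =>
      intro M hM
      have := ihx M hM
      have := ihy M hM
      simp only [Matrix.add_apply, mul_add, Finset.sum_add_distrib]
      rw [ihx M hM, ihy M hM, add_zero]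
    | smul a x hx ihx =>
      intro M hM
      simp only [Matrix.smul_apply, smul_eq_mul]
      calc ∑ i, ∑ j, M i j * (a * x i j) = a * ∑ i, ∑ j, M i j * x i j := by
            rw [Finset.mul_sum]
            exact Finset.sum_congr rfl fun i _ => by
              rw [Finset.mul_sum]
              exact Finset.sum_congr rfl fun j _ => by ring
        _ = 0 := by rw [ihx M hM, mul_zero]
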